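/- Let L be a number field of degree g = [L:ℚ] with ring of integers O_L, let h = |Pic(O_L)| be the class number of L, and let Γ be an order of L with conductor f. Then the cardinality of the set C_Γ of equivalence classes of fractional ideals of Γ satisfies |C_Γ| ≤ N(f)^{g+1} · h. -/

import Mathlib

/-!
Fix an integral ideal `J_c` in every ideal class `c` of `O_L`. A fractional ideal `I` of `Γ`
can be rescaled so that `O_L·I = J_c`, where `c` is the class of `O_L·I`; then
`f·J_c ⊆ I ⊆ J_c`, since `f` is an ideal of `O_L` contained in `Γ`. So the class of `I` is
determined by `c` and by the subgroup `I / f·J_c` of `J_c / f·J_c`, a group of order `N(f)`.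
As a subgroup of the rank `g` lattice `O_L`, `I` is generated by `g` elements, so there are at
most `N(f)^g` such subgroups for each of the `h` classes.
-/

open NumberField

def orderConductor (L : Type*) [Field L] (Γ : Subring L) : Ideal (𝓞 L) where
  carrier := {x : 𝓞 L | ∀ y : 𝓞 L, algebraMap (𝓞 L) L (x * y) ∈ Γ}
  add_mem' := by
    intro a b ha hb y
    have : (a + b) * y = a * y + b * y := add_mul a b y
    rw [this, map_add]
    exact Γ.add_mem (ha y) (hb y)
  zero_mem' := by
    intro y
    rw [zero_mul, map_zero]
    exact Γ.zero_mem
  smul_mem' := by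
    intro c x hx y
    have : c • x * y = x * (c * y) := by rw [smul_eq_mul]; ring
    rw [this]
    exact hx (c * y)

def FractionalIdealOf (L : Type*) [Field L] (Γ : Subring L) : Type _ :=
  {I : Submodule Γ L // I ≠ ⊥ ∧ I.FG}

/-- `Quot (FracIdealRel L Γ)` is the set `C_Γ` of classes of fractional ideals. -/
def FracIdealRel (L : Type*) [Field L] (Γ : Subring L)
    (I I' : FractionalIdealOf L Γ) : Prop :=
  ∃ x : L, x ≠ 0 ∧ ∀ y : L, y ∈ I'.1 ↔ ∃ z ∈ I.1, y = x * z

open scoped Pointwise nonZeroDivisors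

namespace Submodule

variable {R M : Type*} [CommRing R] [IsDomain R] [IsPrincipalIdealRing R]
  [AddCommGroup M] [Module R M] [Module.Free R M] [Module.Finite R M]

theorem exists_fin_finrank_span_range_eq (P : Submodule R M) :
    ∃ v : Fin (Module.finrank R M) → M, span R (Set.range v) = P := by
  obtain ⟨m, b⟩ := P.basisOfPid (Module.Free.chooseBasis R M)
  have hm : m ≤ Module.finrank R M := by
    simpa [Module.finrank_eq_card_basis b] using P.finrank_le
  refine ⟨fun i => if h : (i : ℕ) < m then b ⟨i, h⟩ else 0, le_antisymm ?_ ?_⟩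
  · rw [span_le]
    rintro _ ⟨i, rfl⟩
    dsimp only
    split_ifs
    exacts [(b _).2, P.zero_mem]
  · calc P = map P.subtype (span R (Set.range b)) := by rw [b.span_eq, map_subtype_top]
      _ = span R (Set.range (P.subtype ∘ b)) := by rw [map_span, Set.range_comp]
      _ ≤ _ := span_mono <| by
        rintro _ ⟨j, rfl⟩
        exact ⟨Fin.castLE hm j, by simp⟩

theorem exists_surjective_Icc {K J : Submodule R M} (hKJ : K ≤ J) :
    ∃ F : (Fin (Module.finrank R M) → J ⧸ K.comap J.subtype) → Set.Icc K J,
      Function.Surjective F := by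
  let F (v : Fin (Module.finrank R M) → J ⧸ K.comap J.subtype) : Set.Icc K J :=
    ⟨(comap (K.comap J.subtype).mkQ (span R (Set.range v))).map J.subtype,
      fun k hk => ⟨⟨k, hKJ hk⟩, LinearMap.ker_le_comap _ (by rwa [ker_mkQ]), rfl⟩,
      map_subtype_le _ _⟩
  refine ⟨F, fun ⟨P, hKP, hPJ⟩ => ?_⟩
  obtain ⟨w, hw⟩ := P.exists_fin_finrank_span_range_eq
  have hwJ i : w i ∈ J := hPJ (hw ▸ subset_span ⟨i, rfl⟩)
  let w' i : J := ⟨w i, hwJ i⟩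
  have hw' : span R (Set.range w') = P.comap J.subtype := by
    apply map_injective_of_injective J.injective_subtype
    rw [map_span, ← Set.range_comp, map_comap_subtype, inf_of_le_right hPJ]
    exact hw
  refine ⟨fun i => (K.comap J.subtype).mkQ (w' i), Subtype.ext ?_⟩
  show map J.subtype (comap _ (span R (Set.range ((K.comap J.subtype).mkQ ∘ w')))) = P
  rw [Set.range_comp, ← map_span, hw', comap_map_mkQ, sup_of_le_right (comap_mono hKP),
    map_comap_subtype, inf_of_le_right hPJ]

theorem finite_Icc {K J : Submodule R M} (hKJ : K ≤ J) [Finite (J ⧸ K.comap J.subtype)] :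
    Finite (Set.Icc K J) :=
  have ⟨_, hF⟩ := exists_surjective_Icc hKJ
  Finite.of_surjective _ hF

theorem card_Icc_le {K J : Submodule R M} (hKJ : K ≤ J) [Finite (J ⧸ K.comap J.subtype)] :
    Nat.card (Set.Icc K J) ≤ Nat.card (J ⧸ K.comap J.subtype) ^ Module.finrank R M := by
  obtain ⟨_, hF⟩ := exists_surjective_Icc hKJ
  exact (Nat.card_le_card_of_surjective _ hF).trans_eq (by rw [Nat.card_fun, Nat.card_fin])

end Submodule

theorem Ideal.card_quotient_comap_mul_eq_absNorm {S : Type*} [CommRing S] [IsDedekindDomain S]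
    [Module.Free ℤ S] [Module.Finite ℤ S] (I : Ideal S) {J : Ideal S} (hJ : J ≠ ⊥) :
    Nat.card (J.restrictScalars ℤ ⧸
      ((I * J).restrictScalars ℤ).comap (J.restrictScalars ℤ).subtype) = Ideal.absNorm I := by
  have hJ0 : Ideal.absNorm J ≠ 0 := Ideal.absNorm_eq_zero_iff.not.2 hJ
  have hJ_index : J.toAddSubgroup.index = Ideal.absNorm J := by
    rw [Ideal.absNorm_apply, Submodule.cardQuot_apply]; rfl
  have hIJ_index : (I * J).toAddSubgroup.index = Ideal.absNorm I * Ideal.absNorm J := by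
    rw [← map_mul, Ideal.absNorm_apply, Submodule.cardQuot_apply]; rfl
  have h := AddSubgroup.relIndex_mul_index (H := (I * J).toAddSubgroup) (K := J.toAddSubgroup)
    fun _ h => Ideal.mul_le_right h
  rw [hJ_index, hIJ_index] at h
  exact Nat.eq_of_mul_eq_mul_right (Nat.pos_of_ne_zero hJ0) h

theorem ClassGroup.exists_smul_eq_coeSubmodule {R K : Type*} [CommRing R] [IsDedekindDomain R]
    [Field K] [Algebra R K] [IsFractionRing R K] {rep : ClassGroup R → (Ideal R)⁰}
    (hrep : Function.RightInverse rep ClassGroup.mk0) {S : Submodule R K} (hS : S.FG)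
    (hS0 : S ≠ ⊥) :
    ∃ c, ∃ x : K, x ≠ 0 ∧ x • S = IsLocalization.coeSubmodule K (rep c : Ideal R) := by
  let U : (FractionalIdeal R⁰ K)ˣ :=
    Units.mk0 ⟨S, FractionalIdeal.isFractional_of_fg hS⟩
      (FractionalIdeal.coeToSubmodule_ne_bot.1 hS0)
  let c := ClassGroup.mk K U
  have : ClassGroup.mk K (U⁻¹ * FractionalIdeal.mk0 K (rep c)) = 1 := by
    rw [map_mul, map_inv, ClassGroup.mk_mk0, hrep c, inv_mul_cancel]
  obtain ⟨x, hx⟩ := (ClassGroup.mk_eq_one_iff.1 this).principal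
  have hx' : ((U⁻¹ * FractionalIdeal.mk0 K (rep c) : (FractionalIdeal R⁰ K)ˣ) :
      FractionalIdeal R⁰ K) = FractionalIdeal.spanSingleton R⁰ x :=
    FractionalIdeal.coeToSubmodule_injective (hx.trans (FractionalIdeal.coe_spanSingleton _ x).symm)
  have hx0 : x ≠ 0 := by
    rintro rfl
    exact Units.ne_zero _ (hx'.trans FractionalIdeal.spanSingleton_zero)
  refine ⟨c, x, hx0, ?_⟩
  have hU : (FractionalIdeal.mk0 K (rep c) : FractionalIdeal R⁰ K) =
      U * FractionalIdeal.spanSingleton R⁰ x := by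
    rw [← hx', ← Units.val_mul, mul_inv_cancel_left]
  have := congrArg (fun I : FractionalIdeal R⁰ K => (I : Submodule R K)) hU
  simp only [FractionalIdeal.coe_mk0, FractionalIdeal.coe_mul, FractionalIdeal.coe_spanSingleton,
    FractionalIdeal.coe_coeIdeal, Submodule.mul_comm, Submodule.span_singleton_mul] at this
  exact this.symm

section Order

variable {L : Type*} [Field L] {Γ : Subring L}

theorem le_range_algebraMap_ringOfIntegers (hΓ : Module.Finite ℤ Γ) :
    Γ ≤ (algebraMap (𝓞 L) L).range := fun x hx =>
  ⟨⟨x, (IsIntegral.of_finite ℤ (⟨x, hx⟩ : Γ)).map Γ.subtype.toIntAlgHom⟩, rfl⟩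

theorem fg_span_ringOfIntegers (hΓ : Γ ≤ (algebraMap (𝓞 L) L).range) {I : Submodule Γ L}
    (hI : I.FG) : (Submodule.span (𝓞 L) (I : Set L)).FG := by
  obtain ⟨s, rfl⟩ := hI
  refine ⟨s, le_antisymm (Submodule.span_mono Submodule.subset_span)
    (Submodule.span_le.2 fun z hz => ?_)⟩
  induction hz using Submodule.span_induction with
  | mem z hz => exact Submodule.subset_span hz
  | zero => exact zero_mem _
  | add _ _ _ _ ha hb => exact add_mem ha hb
  | smul γ z _ hz =>
    obtain ⟨r, hr⟩ := hΓ γ.2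
    rw [Subring.smul_def, ← hr, smul_eq_mul, ← Algebra.smul_def]
    exact Submodule.smul_mem _ r hz

theorem orderConductor_ne_bot [NumberField L] (hΓ : Submodule.span ℚ (Γ : Set L) = ⊤) :
    orderConductor L Γ ≠ ⊥ := by
  let Γ' : Submodule ℤ (𝓞 L) := Γ.toAddSubgroup.toIntSubmodule.comap
    ((Algebra.linearMap (𝓞 L) L).restrictScalars ℤ)
  have htors : Module.IsTorsion ℤ (𝓞 L ⧸ Γ') := by
    rintro ⟨x⟩
    obtain ⟨t, ht⟩ := multiple_mem_span_of_mem_localization_span ℤ⁰ ℚ (Γ : Set L) (x : L)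
      (hΓ ▸ Submodule.mem_top)
    refine ⟨t, (Submodule.Quotient.mk_eq_zero Γ' (x := t • x)).2 ?_⟩
    simpa [Γ'] using Submodule.span_le (p := Γ.toAddSubgroup.toIntSubmodule).2 subset_rfl ht
  obtain ⟨n, hn, hn0⟩ := Submodule.annihilator_top_inter_nonZeroDivisors htors
  have hnf : (n : 𝓞 L) ∈ orderConductor L Γ := fun y => by
    have : n • Submodule.Quotient.mk (p := Γ') y = 0 := Submodule.mem_annihilator.1 hn _ trivial
    rw [← zsmul_eq_mul]
    exact (Submodule.Quotient.mk_eq_zero Γ').1 this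
  intro hbot
  rw [hbot, Ideal.mem_bot, Int.cast_eq_zero] at hnf
  exact nonZeroDivisors.ne_zero hn0 hnf

theorem algebraMap_mul_mem_of_mem_orderConductor {I : Submodule Γ L} {a : 𝓞 L}
    (ha : a ∈ orderConductor L Γ) {z : L} (hz : z ∈ Submodule.span (𝓞 L) (I : Set L)) :
    algebraMap (𝓞 L) L a * z ∈ I := by
  induction hz using Submodule.span_induction generalizing a with
  | mem z hz => exact I.smul_mem ⟨_, by simpa using ha 1⟩ hz
  | zero => simp
  | add x y _ _ hx hy => rw [mul_add]; exact add_mem (hx ha) (hy ha)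
  | smul r x _ hx =>
    rw [Algebra.smul_def, ← mul_assoc, ← map_mul]
    exact hx (Ideal.mul_mem_right r _ ha)

variable (Γ) in
def intermediateLattices (J : Ideal (𝓞 L)) : Set (Submodule ℤ (𝓞 L)) :=
  Set.Icc ((orderConductor L Γ * J).restrictScalars ℤ) (J.restrictScalars ℤ)

theorem exists_mem_intermediateLattices_coe_eq_image {I : Submodule Γ L} {J : Ideal (𝓞 L)}
    (hIJ : Submodule.span (𝓞 L) (I : Set L) = IsLocalization.coeSubmodule L J) :
    ∃ P ∈ intermediateLattices Γ J, (I : Set L) = algebraMap (𝓞 L) L '' P := by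
  have hI z (hz : z ∈ I) : ∃ y ∈ J, algebraMap (𝓞 L) L y = z := by
    rw [← IsLocalization.mem_coeSubmodule, ← hIJ]
    exact Submodule.subset_span hz
  refine ⟨(I.restrictScalars ℤ).comap ((Algebra.linearMap (𝓞 L) L).restrictScalars ℤ),
    ⟨fun t ht => ?_, fun t ht => ?_⟩, ?_⟩
  · have ht : t ∈ orderConductor L Γ * J := ht
    refine Submodule.mul_induction_on (C := fun t => algebraMap (𝓞 L) L t ∈ I) ht
      (fun a ha r hr => ?_) (fun _ _ => by simpa only [map_add] using add_mem)
    rw [map_mul]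
    refine algebraMap_mul_mem_of_mem_orderConductor ha ?_
    rw [hIJ]
    exact (IsLocalization.mem_coeSubmodule L J).2 ⟨r, hr, rfl⟩
  · obtain ⟨y, hy, hyt⟩ := hI _ ht
    rwa [← RingOfIntegers.coe_injective hyt]
  · refine (Set.image_preimage_eq_of_subset fun z hz => ?_).symm
    obtain ⟨y, -, rfl⟩ := hI z hz
    exact ⟨y, rfl⟩

end Order

namespace FractionalIdealOf

variable {L : Type*} [Field L] {Γ : Subring L}

def smul (x : L) (hx : x ≠ 0) (I : FractionalIdealOf L Γ) : FractionalIdealOf L Γ :=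
  ⟨x • I.1, fun h => I.2.1 (by rw [← inv_smul_smul₀ hx I.1, h, Submodule.smul_bot']),
    I.2.2.map _⟩

theorem fracIdealRel_smul {x : L} (hx : x ≠ 0) (I : FractionalIdealOf L Γ) :
    FracIdealRel L Γ I (I.smul x hx) :=
  ⟨x, hx, fun y => (Submodule.mem_smul_pointwise_iff_exists y x I.1).trans <| by
    simp only [smul_eq_mul, eq_comm]⟩

end FractionalIdealOf

theorem exists_injective_sigma_intermediateLattices {L : Type*} [Field L] [NumberField L]
    {Γ : Subring L} (hΓ : Module.Finite ℤ Γ)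
    {rep : ClassGroup (𝓞 L) → (Ideal (𝓞 L))⁰}
    (hrep : Function.RightInverse rep ClassGroup.mk0) :
    ∃ G : Quot (FracIdealRel L Γ) → Σ c, intermediateLattices Γ (rep c),
      Function.Injective G := by
  have key (q : Quot (FracIdealRel L Γ)) : ∃ p : Σ c, intermediateLattices Γ (rep c),
      ∃ I : FractionalIdealOf L Γ, Quot.mk _ I = q ∧
        (I.1 : Set L) = algebraMap (𝓞 L) L '' p.2 := by
    induction q using Quot.ind with | mk I
    have hspan0 : Submodule.span (𝓞 L) (I.1 : Set L) ≠ ⊥ := by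
      rw [Ne, Submodule.span_eq_bot]
      exact fun h => I.2.1 ((Submodule.eq_bot_iff _).2 h)
    obtain ⟨c, x, hx, hxI⟩ := ClassGroup.exists_smul_eq_coeSubmodule hrep
      (fg_span_ringOfIntegers (le_range_algebraMap_ringOfIntegers hΓ) I.2.2) hspan0
    obtain ⟨P, hP, hIP⟩ := exists_mem_intermediateLattices_coe_eq_image
      (I := (I.smul x hx).1) (J := rep c) (by rw [← hxI, Submodule.smul_span]; rfl)
    exact ⟨⟨c, P, hP⟩, I.smul x hx, (Quot.sound (I.fracIdealRel_smul hx)).symm, hIP⟩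
  choose G I hIq hIG using key
  refine ⟨G, fun q q' h => ?_⟩
  have : I q = I q' := Subtype.ext <| SetLike.coe_injective <| by rw [hIG, hIG, h]
  rw [← hIq q, ← hIq q', this]

/-- Let `L` be a number field of degree `g = [L:ℚ]` with ring of
integers `O_L`, let `h = |Pic(O_L)|` be the class number of `L`, and let `Γ` be an
order of `L` with conductor `f`.  Then the set `C_Γ` of equivalence classes of
fractional ideals of `Γ` satisfies `|C_Γ| ≤ N(f)^{g+1} · h`. -/
theorem card_fracIdealClasses_le
    (L : Type*) [Field L] [NumberField L]
    (g : ℕ) (hg : g = Module.finrank ℚ L)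
    (Γ : Subring L) (hΓfin : Module.Finite ℤ Γ)
    (hΓspan : Submodule.span ℚ (Γ : Set L) = ⊤) :
    Nat.card (Quot (FracIdealRel L Γ)) ≤
      (Nat.card (𝓞 L ⧸ orderConductor L Γ)) ^ (g + 1) *
        Nat.card (ClassGroup (𝓞 L)) := by
  set N := Nat.card (𝓞 L ⧸ orderConductor L Γ)
  let rep := Function.surjInv (ClassGroup.mk0_surjective (R := 𝓞 L))
  let J c : Submodule ℤ (𝓞 L) := (rep c : Ideal (𝓞 L)).restrictScalars ℤ
  let K c : Submodule ℤ (𝓞 L) := (orderConductor L Γ * rep c).restrictScalars ℤ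
  have hKJ c : K c ≤ J c := fun _ h => Ideal.mul_le_right h
  have hN : N = Ideal.absNorm (orderConductor L Γ) := by
    rw [Ideal.absNorm_apply, Submodule.cardQuot_apply]
  have hN0 : N ≠ 0 := hN ▸ Ideal.absNorm_eq_zero_iff.not.2 (orderConductor_ne_bot hΓspan)
  have hQ c : Nat.card (J c ⧸ (K c).comap (J c).subtype) = N :=
    hN ▸ Ideal.card_quotient_comap_mul_eq_absNorm _ (nonZeroDivisors.coe_ne_zero (rep c))
  have hQfin c : Finite (J c ⧸ (K c).comap (J c).subtype) :=
    Nat.finite_of_card_ne_zero ((hQ c).trans_ne hN0)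
  have hfin c : Finite (intermediateLattices Γ (rep c)) := Submodule.finite_Icc (hKJ c)
  obtain ⟨G, hG⟩ := exists_injective_sigma_intermediateLattices hΓfin
    (Function.rightInverse_surjInv ClassGroup.mk0_surjective)
  calc Nat.card (Quot (FracIdealRel L Γ))
      ≤ Nat.card (Σ c, intermediateLattices Γ (rep c)) := Nat.card_le_card_of_injective G hG
    _ = ∑ c, Nat.card (intermediateLattices Γ (rep c)) := Nat.card_sigma
    _ ≤ ∑ _c : ClassGroup (𝓞 L), N ^ g := Finset.sum_le_sum fun c _ =>
        (Submodule.card_Icc_le (hKJ c)).trans_eq (by rw [hQ, RingOfIntegers.rank, hg])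
    _ ≤ N ^ (g + 1) * Nat.card (ClassGroup (𝓞 L)) := by
      rw [Finset.sum_const, Finset.card_univ, smul_eq_mul, Nat.card_eq_fintype_card, mul_comm]
      exact Nat.mul_le_mul_right _ (Nat.pow_le_pow_right (Nat.pos_of_ne_zero hN0) g.le_succ)
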